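/- arXiv:0910.0069 — 4 statements merged into one kernel-verified Lean document; each statement's English description precedes it below -/
import Mathlib

section
/- The Macdonald functions satisfy the product formula K_ν(z) K_ν(w) = ½ ∫_0^∞ exp(−½[t + (z²+w²)/t]) K_ν(zw/t) dt/t, for z, w > 0 and ν ∈ ℂ. -/
noncomputable section
open Real MeasureTheory

/-- The Macdonald function `K_ν(z) = ½ ∫_0^∞ t^{ν-1} exp(-(z/2)(t + 1/t)) dt`. -/
def besselK (ν : ℂ) (z : ℝ) : ℂ :=
  (1 / 2) * ∫ t in Set.Ioi (0 : ℝ), (t : ℂ) ^ (ν - 1) *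
    Complex.exp (-((z : ℂ) / 2) * ((t : ℂ) + 1 / (t : ℂ)))

/-!
Reflecting `u ↦ 1/u` gives `K_ν = K_{-ν}`, so `4 K_ν(z) K_ν(w)` is the double integral of
`s^{ν-1} u^{-ν-1} exp(-(z/2)(s + 1/s) - (w/2)(u + 1/u))` over the positive quadrant.
The substitutions `u = s/v` and then `s = t/(z + w/v)` turn the integrand into
`v^{ν-1} t^{-1} exp(-t/2 - (z + w/v)(z + wv)/(2t))`, and since
`(z + w/v)(z + wv) = z² + w² + zw(v + 1/v)`, the integral over `v` is `2 K_ν(zw/t)`.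
Both substitutions preserve absolute integrability, which justifies the two exchanges of the
order of integration.
-/

open Set
open scoped Nat

theorem integrableOn_rpow_mul_exp_neg_add_div (r : ℝ) {α β : ℝ} (hα : 0 < α) (hβ : 0 < β) :
    IntegrableOn (fun t : ℝ => t ^ r * Real.exp (-(α * t + β / t))) (Ioi 0) := by
  -- `exp (-β / t) ≤ n! (t / β) ^ n` trades the singular factor at `0` for the power `t ^ n`
  obtain ⟨n, hn⟩ := exists_nat_gt (-r - 1)
  have hdom : IntegrableOn (fun t : ℝ => n ! / β ^ n * (t ^ (r + n) * Real.exp (-α * t)))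
      (Ioi 0) := by
    have h := integrableOn_rpow_mul_exp_neg_mul_rpow (s := r + n) (p := 1) (by linarith)
      one_pos hα
    simp only [rpow_one] at h
    exact h.const_mul _
  refine hdom.mono' (by fun_prop) ?_
  filter_upwards [ae_restrict_mem measurableSet_Ioi] with t (ht : 0 < t)
  have hsing : Real.exp (-(β / t)) ≤ n ! / β ^ n * t ^ n := by
    calc Real.exp (-(β / t)) = (Real.exp (β / t))⁻¹ := Real.exp_neg _
      _ ≤ ((β / t) ^ n / n !)⁻¹ :=
        inv_anti₀ (by positivity) (pow_div_factorial_le_exp _ (by positivity) n)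
      _ = n ! / β ^ n * t ^ n := by rw [div_pow]; field_simp
  rw [norm_of_nonneg (by positivity)]
  calc t ^ r * Real.exp (-(α * t + β / t))
      = t ^ r * Real.exp (-α * t) * Real.exp (-(β / t)) := by
        rw [mul_assoc, ← Real.exp_add, neg_add, neg_mul]
    _ ≤ t ^ r * Real.exp (-α * t) * (n ! / β ^ n * t ^ n) := by gcongr
    _ = n ! / β ^ n * (t ^ (r + n) * Real.exp (-α * t)) := by
        rw [rpow_add ht, rpow_natCast]; ring

section ChangeOfVariables

variable {E : Type*} [NormedAddCommGroup E] [NormedSpace ℝ E]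

theorem image_div_Ioi_zero {a : ℝ} (ha : 0 < a) : (a / ·) '' Ioi 0 = Ioi (0 : ℝ) := by
  ext y
  refine ⟨?_, fun hy => ⟨a / y, div_pos ha hy, div_div_cancel₀ ha.ne'⟩⟩
  rintro ⟨x, hx, rfl⟩
  exact div_pos ha hx

theorem hasDerivWithinAt_div_Ioi_zero (a : ℝ) {x : ℝ} (hx : x ∈ Ioi (0 : ℝ)) :
    HasDerivWithinAt (a / ·) (-(a / x ^ 2)) (Ioi 0) x := by
  simpa [div_eq_mul_inv, ← mul_neg] using
    ((hasDerivAt_inv (ne_of_gt hx)).const_mul a).hasDerivWithinAt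

theorem injOn_div_Ioi_zero {a : ℝ} (ha : 0 < a) : InjOn (a / ·) (Ioi (0 : ℝ)) :=
  fun _ _ _ _ hxy => inv_injective (mul_left_cancel₀ ha.ne' hxy)

theorem integral_comp_div_Ioi (g : ℝ → E) {a : ℝ} (ha : 0 < a) :
    ∫ x in Ioi 0, g x = ∫ x in Ioi 0, (a / x ^ 2) • g (a / x) := by
  have h := integral_image_eq_integral_abs_deriv_smul measurableSet_Ioi
    (fun x hx => hasDerivWithinAt_div_Ioi_zero a hx) (injOn_div_Ioi_zero ha) g
  rw [image_div_Ioi_zero ha] at h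
  rw [h]
  refine setIntegral_congr_fun measurableSet_Ioi fun x (hx : 0 < x) => ?_
  rw [abs_neg, abs_of_pos (by positivity)]

theorem integrableOn_comp_div_Ioi_iff (g : ℝ → E) {a : ℝ} (ha : 0 < a) :
    IntegrableOn (fun x => (a / x ^ 2) • g (a / x)) (Ioi 0) ↔ IntegrableOn g (Ioi 0) := by
  have h := integrableOn_image_iff_integrableOn_abs_deriv_smul measurableSet_Ioi
    (fun x hx => hasDerivWithinAt_div_Ioi_zero a hx) (injOn_div_Ioi_zero ha) g
  rw [image_div_Ioi_zero ha] at h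
  rw [h]
  refine integrableOn_congr_fun (fun x (hx : 0 < x) => ?_) measurableSet_Ioi
  rw [abs_neg, abs_of_pos (by positivity)]

theorem integral_Ioi_eq_integral_smul_comp_mul (g : ℝ → E) {b : ℝ} (hb : 0 < b) :
    ∫ x in Ioi 0, g x = ∫ x in Ioi 0, b • g (b * x) := by
  rw [integral_smul, integral_comp_mul_left_Ioi' g 0 hb, mul_zero]

end ChangeOfVariables

section Fubini

variable {𝕜 E : Type*} [RCLike 𝕜] [NormedAddCommGroup E] [NormedSpace ℝ E]

theorem integrable_mul_smul_comp_div {f g : ℝ → 𝕜} (hfm : Measurable f) (hgm : Measurable g)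
    (hf : IntegrableOn f (Ioi 0)) (hg : IntegrableOn g (Ioi 0)) :
    Integrable (fun p : ℝ × ℝ => f p.1 * ((p.1 / p.2 ^ 2) • g (p.1 / p.2)))
      ((volume.restrict (Ioi 0)).prod (volume.restrict (Ioi 0))) := by
  refine (integrable_prod_iff (by fun_prop)).mpr ⟨?_, ?_⟩
  · filter_upwards [ae_restrict_mem measurableSet_Ioi] with s (hs : 0 < s)
    exact ((integrableOn_comp_div_Ioi_iff g hs).mpr hg).const_mul (f s)
  · refine (hf.norm.mul_const (∫ u in Ioi 0, ‖g u‖)).congr ?_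
    filter_upwards [ae_restrict_mem measurableSet_Ioi] with s (hs : 0 < s)
    rw [integral_comp_div_Ioi (‖g ·‖) hs, ← integral_const_mul]
    refine setIntegral_congr_fun measurableSet_Ioi fun v (hv : 0 < v) => ?_
    rw [norm_mul, norm_smul, Real.norm_of_nonneg (by positivity), smul_eq_mul]

theorem integral_mul_integral_eq_integral_integral_comp_div {f g : ℝ → 𝕜} (hfm : Measurable f)
    (hgm : Measurable g) (hf : IntegrableOn f (Ioi 0)) (hg : IntegrableOn g (Ioi 0)) :
    (∫ s in Ioi 0, f s) * (∫ u in Ioi 0, g u) =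
      ∫ v in Ioi 0, ∫ s in Ioi 0, f s * ((s / v ^ 2) • g (s / v)) := by
  rw [← integral_integral_swap (integrable_mul_smul_comp_div hfm hgm hf hg), ← integral_mul_const]
  refine setIntegral_congr_fun measurableSet_Ioi fun s (hs : 0 < s) => ?_
  rw [integral_comp_div_Ioi g hs, integral_const_mul]

theorem integrable_smul_comp_mul_prod {F : ℝ × ℝ → E} (hFm : StronglyMeasurable F)
    (hF : Integrable F ((volume.restrict (Ioi 0)).prod (volume.restrict (Ioi 0))))
    {b : ℝ → ℝ} (hbm : Measurable b) (hb : ∀ v, 0 < v → 0 < b v) :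
    Integrable (fun q : ℝ × ℝ => b q.1 • F (b q.1 * q.2, q.1))
      ((volume.restrict (Ioi 0)).prod (volume.restrict (Ioi 0))) := by
  have hm : StronglyMeasurable fun q : ℝ × ℝ => b q.1 • F (b q.1 * q.2, q.1) :=
    (hbm.comp measurable_fst).stronglyMeasurable.smul (hFm.comp_measurable (by fun_prop))
  refine (integrable_prod_iff hm.aestronglyMeasurable).mpr ⟨?_, ?_⟩
  · filter_upwards [ae_restrict_mem measurableSet_Ioi, hF.prod_left_ae] with v (hv : 0 < v) hFv
    refine Integrable.smul (b v) ?_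
    exact (integrableOn_Ioi_comp_mul_left_iff (fun s => F (s, v)) 0 (hb v hv)).mpr
      (by rwa [mul_zero])
  · refine hF.integral_norm_prod_right.congr ?_
    filter_upwards [ae_restrict_mem measurableSet_Ioi] with v (hv : 0 < v)
    rw [integral_Ioi_eq_integral_smul_comp_mul (fun s => ‖F (s, v)‖) (hb v hv)]
    refine setIntegral_congr_fun measurableSet_Ioi fun t _ => ?_
    rw [norm_smul, Real.norm_of_nonneg (hb v hv).le, smul_eq_mul]

end Fubini

theorem ofReal_eq_exp_log {x : ℝ} (hx : 0 < x) : (x : ℂ) = Complex.exp (Real.log x) := by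
  rw [← Complex.ofReal_exp, Real.exp_log hx]

theorem ofReal_cpow_eq_exp_log {x : ℝ} (hx : 0 < x) (c : ℂ) :
    (x : ℂ) ^ c = Complex.exp (c * Real.log x) := by
  rw [Complex.cpow_def_of_ne_zero (by exact_mod_cast hx.ne'), Complex.ofReal_log hx.le, mul_comm]

def besselIntegrand (c : ℂ) (α β t : ℝ) : ℂ :=
  (t : ℂ) ^ c * Complex.exp (-(α * t + β / t))

theorem besselIntegrand_eq_exp (c : ℂ) (α β : ℝ) {t : ℝ} (ht : 0 < t) :
    besselIntegrand c α β t = Complex.exp (c * Real.log t - (α * t + β / t)) := by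
  rw [besselIntegrand, ofReal_cpow_eq_exp_log ht, ← Complex.exp_add, sub_eq_add_neg]

theorem norm_besselIntegrand (c : ℂ) (α β : ℝ) {t : ℝ} (ht : 0 < t) :
    ‖besselIntegrand c α β t‖ = t ^ c.re * Real.exp (-(α * t + β / t)) := by
  rw [besselIntegrand, norm_mul, Complex.norm_cpow_eq_rpow_re_of_pos ht, Complex.norm_exp]
  norm_cast

@[fun_prop]
theorem measurable_besselIntegrand (c : ℂ) (α β : ℝ) : Measurable (besselIntegrand c α β) := by
  unfold besselIntegrand; fun_prop

theorem integrableOn_besselIntegrand (c : ℂ) {α β : ℝ} (hα : 0 < α) (hβ : 0 < β) :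
    IntegrableOn (besselIntegrand c α β) (Ioi 0) := by
  refine (integrableOn_rpow_mul_exp_neg_add_div c.re hα hβ).mono'
    (measurable_besselIntegrand c α β).aestronglyMeasurable ?_
  filter_upwards [ae_restrict_mem measurableSet_Ioi] with t (ht : 0 < t)
  exact (norm_besselIntegrand c α β ht).le

theorem besselIntegrand_neg_one (α β t : ℝ) :
    besselIntegrand (-1) α β t = Real.exp (-(α * t + β / t)) * (1 / t) := by
  rw [besselIntegrand, Complex.cpow_neg_one, mul_comm, one_div]; push_cast; rfl

theorem one_div_sq_smul_besselIntegrand_one_div (c : ℂ) (α β : ℝ) {x : ℝ} (hx : 0 < x) :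
    (1 / x ^ 2) • besselIntegrand c α β (1 / x) = besselIntegrand (-c - 2) β α x := by
  rw [Complex.real_smul, besselIntegrand_eq_exp _ _ _ (by positivity),
    besselIntegrand_eq_exp _ _ _ hx, ofReal_eq_exp_log (by positivity : (0 : ℝ) < 1 / x ^ 2),
    ← Complex.exp_add]
  congr 1
  rw [one_div, one_div, Real.log_inv, Real.log_inv, Real.log_pow]
  push_cast
  field_simp
  ring

theorem besselIntegrand_mul_smul_besselIntegrand_div (c d : ℂ) (α β γ δ : ℝ) {s v : ℝ}
    (hs : 0 < s) (hv : 0 < v) :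
    besselIntegrand c α β s * ((s / v ^ 2) • besselIntegrand d γ δ (s / v)) =
      (v : ℂ) ^ (-d - 2) * besselIntegrand (c + d + 1) (α + γ / v) (β + δ * v) s := by
  rw [Complex.real_smul, besselIntegrand_eq_exp _ _ _ hs, besselIntegrand_eq_exp _ _ _ hs,
    besselIntegrand_eq_exp _ _ _ (by positivity),
    ofReal_eq_exp_log (by positivity : 0 < s / v ^ 2), ofReal_cpow_eq_exp_log hv]
  simp only [← Complex.exp_add]
  congr 1
  rw [Real.log_div hs.ne' (by positivity), Real.log_div hs.ne' hv.ne', Real.log_pow]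
  have hv' : (v : ℂ) ≠ 0 := by exact_mod_cast hv.ne'
  push_cast
  field_simp
  ring

theorem smul_besselIntegrand_mul (c : ℂ) (α β : ℝ) {b t : ℝ} (hb : 0 < b) (ht : 0 < t) :
    b • besselIntegrand c α β (b * t) =
      (b : ℂ) ^ (c + 1) * besselIntegrand c (α * b) (β / b) t := by
  rw [Complex.real_smul, besselIntegrand_eq_exp _ _ _ (by positivity),
    besselIntegrand_eq_exp _ _ _ ht, ofReal_cpow_eq_exp_log hb, ofReal_eq_exp_log hb]
  simp only [← Complex.exp_add]
  congr 1
  rw [Real.log_mul hb.ne' ht.ne']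
  have hb' : (b : ℂ) ≠ 0 := by exact_mod_cast hb.ne'
  push_cast
  field_simp
  ring

theorem cpow_mul_besselIntegrand_add (c d : ℂ) (α β γ : ℝ) {v t : ℝ} (hv : 0 < v) (ht : 0 < t) :
    (v : ℂ) ^ c * besselIntegrand d α (β + γ * (v + v⁻¹)) t =
      besselIntegrand d α β t * besselIntegrand c (γ / t) (γ / t) v := by
  rw [besselIntegrand_eq_exp _ _ _ ht, besselIntegrand_eq_exp _ _ _ ht,
    besselIntegrand_eq_exp _ _ _ hv, ofReal_cpow_eq_exp_log hv]
  simp only [← Complex.exp_add]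
  congr 1
  push_cast
  field_simp
  ring

theorem besselK_eq_integral_besselIntegrand (ν : ℂ) (x : ℝ) :
    besselK ν x = 1 / 2 * ∫ t in Ioi 0, besselIntegrand (ν - 1) (x / 2) (x / 2) t := by
  rw [besselK]
  congr 1
  refine setIntegral_congr_fun measurableSet_Ioi fun t _ => ?_
  rw [besselIntegrand]
  push_cast
  ring_nf

theorem integral_besselIntegrand_swap (c : ℂ) (α β : ℝ) :
    ∫ t in Ioi 0, besselIntegrand c α β t = ∫ t in Ioi 0, besselIntegrand (-c - 2) β α t := by
  rw [integral_comp_div_Ioi _ one_pos]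
  exact setIntegral_congr_fun measurableSet_Ioi fun x hx =>
    one_div_sq_smul_besselIntegrand_one_div c α β hx

theorem besselK_neg (ν : ℂ) (x : ℝ) : besselK (-ν) x = besselK ν x := by
  rw [besselK_eq_integral_besselIntegrand, besselK_eq_integral_besselIntegrand,
    integral_besselIntegrand_swap]
  ring_nf

theorem smul_besselIntegrand_mul_smul_besselIntegrand_div (ν : ℂ) {z w v t : ℝ} (hz : 0 < z)
    (hw : 0 < w) (hv : 0 < v) (ht : 0 < t) :
    (z + w / v)⁻¹ • (besselIntegrand (ν - 1) (z / 2) (z / 2) ((z + w / v)⁻¹ * t) *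
      (((z + w / v)⁻¹ * t / v ^ 2) •
        besselIntegrand (-ν - 1) (w / 2) (w / 2) ((z + w / v)⁻¹ * t / v))) =
      besselIntegrand (-1) (1 / 2) ((z ^ 2 + w ^ 2) / 2) t *
        besselIntegrand (ν - 1) (z * w / t / 2) (z * w / t / 2) v := by
  have hb : 0 < (z + w / v)⁻¹ := by positivity
  have hα : (z / 2 + w / 2 / v) * (z + w / v)⁻¹ = 1 / 2 := by field_simp
  have hβ : (z / 2 + w / 2 * v) / (z + w / v)⁻¹ =
      (z ^ 2 + w ^ 2) / 2 + z * w / 2 * (v + v⁻¹) := by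
    field_simp; ring
  rw [besselIntegrand_mul_smul_besselIntegrand_div _ _ _ _ _ _ (by positivity) hv, ← mul_smul_comm,
    smul_besselIntegrand_mul _ _ _ hb ht, hα, hβ, show ν - 1 + (-ν - 1) + 1 + 1 = 0 by ring,
    Complex.cpow_zero, one_mul, show -(-ν - 1) - 2 = ν - 1 by ring,
    show ν - 1 + (-ν - 1) + 1 = -1 by ring, cpow_mul_besselIntegrand_add _ _ _ _ _ hv ht,
    div_right_comm]

/-- The product formula
`K_ν(z) K_ν(w) = ½ ∫_0^∞ exp(-½[t + (z²+w²)/t]) K_ν(zw/t) dt/t` for `z, w > 0`. -/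
theorem besselK_product (ν : ℂ) (z w : ℝ) (hz : 0 < z) (hw : 0 < w) :
    besselK ν z * besselK ν w
      = (1 / 2) * ∫ t in Set.Ioi (0 : ℝ),
          (Real.exp (-(1 / 2) * (t + (z ^ 2 + w ^ 2) / t)) : ℂ) *
            besselK ν (z * w / t) * (1 / (t : ℂ)) := by
  set f := besselIntegrand (ν - 1) (z / 2) (z / 2)
  set g := besselIntegrand (-ν - 1) (w / 2) (w / 2)
  set F : ℝ × ℝ → ℂ := fun p => f p.1 * ((p.1 / p.2 ^ 2) • g (p.1 / p.2))
  set b : ℝ → ℝ := fun v => (z + w / v)⁻¹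
  have hb : ∀ v, 0 < v → 0 < b v := fun v hv => by positivity
  have hF : Integrable F ((volume.restrict (Ioi 0)).prod (volume.restrict (Ioi 0))) :=
    integrable_mul_smul_comp_div (by fun_prop) (by fun_prop)
      (integrableOn_besselIntegrand _ (by positivity) (by positivity))
      (integrableOn_besselIntegrand _ (by positivity) (by positivity))
  calc besselK ν z * besselK ν w = 1 / 4 * ((∫ s in Ioi 0, f s) * ∫ u in Ioi 0, g u) := by
        rw [← besselK_neg ν w, besselK_eq_integral_besselIntegrand,
          besselK_eq_integral_besselIntegrand]
        ring
    _ = 1 / 4 * ∫ v in Ioi 0, ∫ s in Ioi 0, F (s, v) := by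
        rw [integral_mul_integral_eq_integral_integral_comp_div (by fun_prop) (by fun_prop)
          (integrableOn_besselIntegrand _ (by positivity) (by positivity))
          (integrableOn_besselIntegrand _ (by positivity) (by positivity))]
    _ = 1 / 4 * ∫ v in Ioi 0, ∫ t in Ioi 0, b v • F (b v * t, v) := by
        congr 1
        exact setIntegral_congr_fun measurableSet_Ioi fun v hv =>
          integral_Ioi_eq_integral_smul_comp_mul _ (hb v hv)
    _ = 1 / 4 * ∫ t in Ioi 0, ∫ v in Ioi 0, b v • F (b v * t, v) := by
        rw [integral_integral_swap (integrable_smul_comp_mul_prod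
          (Measurable.stronglyMeasurable (by fun_prop)) hF (by fun_prop) hb)]
    _ = 1 / 4 * ∫ t in Ioi 0, besselIntegrand (-1) (1 / 2) ((z ^ 2 + w ^ 2) / 2) t *
          ∫ v in Ioi 0, besselIntegrand (ν - 1) (z * w / t / 2) (z * w / t / 2) v := by
        congr 1
        refine setIntegral_congr_fun measurableSet_Ioi fun t (ht : 0 < t) => ?_
        rw [← integral_const_mul]
        exact setIntegral_congr_fun measurableSet_Ioi fun v (hv : 0 < v) =>
          smul_besselIntegrand_mul_smul_besselIntegrand_div ν hz hw hv ht
    _ = _ := by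
        rw [show (1 / 4 : ℂ) = 1 / 2 * (1 / 2) by norm_num, mul_assoc, ← integral_const_mul]
        congr 1
        refine setIntegral_congr_fun measurableSet_Ioi fun t _ => ?_
        rw [besselK_eq_integral_besselIntegrand, besselIntegrand_neg_one,
          show -(1 / 2 * t + (z ^ 2 + w ^ 2) / 2 / t) = -(1 / 2) * (t + (z ^ 2 + w ^ 2) / t) by
            ring]
        ring
end
end

section
/- The N(N−1)/2-dimensional Euclidean volume of the Gelfand–Tsetlin polytope GT_N(x) equals h(x) / ∏_{k=1}^{N-1} k!, where h(x) = ∏_{1≤i<j≤N}(x_i − x_j), for x in the open Weyl chamber C_N = {x ∈ ℝ^N : x_1 > ··· > x_N}. -/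
noncomputable section
open MeasureTheory

/-- The triangular array with free rows `T` (rows `0, …, N-2`, row `k` of length `k+1`) and top
row `x` (row `N-1`). -/
def arrE (N : ℕ) (T : ∀ k : Fin (N - 1), Fin (k.1 + 1) → ℝ) (x : ℕ → ℝ) : ℕ → ℕ → ℝ :=
  fun k i => if hk : k < N - 1 then (if hi : i < k + 1 then T ⟨k, hk⟩ ⟨i, hi⟩ else 0) else x i

/-- The Gelfand–Tsetlin polytope `GT_N(x)`: triangular arrays with top row `x` satisfying the
interlacing conditions `x^{k+1}_{i+1} ≤ x^k_i ≤ x^{k+1}_i`, viewed in the `N(N-1)/2` free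
coordinates. -/
def GTpolytope (N : ℕ) (x : ℕ → ℝ) : Set (∀ k : Fin (N - 1), Fin (k.1 + 1) → ℝ) :=
  {T | ∀ k < N - 1, ∀ i ≤ k,
    arrE N T x (k + 1) (i + 1) ≤ arrE N T x k i ∧ arrE N T x k i ≤ arrE N T x (k + 1) i}

/-!
With `v = -x`, the right-hand side is `det (v i ^ j / j!)`, since `Matrix.det_vandermonde` is
`∏_{i<j} (v j - v i)`. Fixing the free row `y` just below the top row, the rest of the pattern
ranges over `GT_{N-1}(y)`, and `y` ranges over the box `∏ [x_{i+1}, x_i]`, so by Fubini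
`vol GT_N(x) = ∫_box vol GT_{N-1}(y) dy`. By induction the integrand is a determinant whose
`i`-th row depends on `y i` only, so the integral is the determinant of the row-wise integrals;
these are the differences of consecutive rows of the same matrix for `-x`, one size up, which have
the same determinant. Allowing weakly decreasing `x` lets the induction use the closed box.
-/

open Finset Matrix
open scoped Nat

section Field

variable {R : Type*} [Field R]

def normVandermonde {n : ℕ} (v : Fin n → R) : Matrix (Fin n) (Fin n) R :=
  of fun i j => v i ^ (j : ℕ) / ((j : ℕ)! : R)

theorem det_normVandermonde {n : ℕ} (v : Fin n → R) :
    (normVandermonde v).det = (vandermonde v).det / ∏ j : Fin n, ((j : ℕ)! : R) := by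
  have : normVandermonde v = vandermonde v * diagonal fun j : Fin n => ((j : ℕ)! : R)⁻¹ := by
    ext i j
    simp [normVandermonde, vandermonde, div_eq_mul_inv]
  rw [this, det_mul, det_diagonal, prod_inv_distrib, div_eq_mul_inv]

/- Subtracting from each row its predecessor turns the first column into `(1, 0, …, 0)`. -/
theorem det_normVandermonde_succ {m : ℕ} (u : Fin (m + 1) → R) :
    (normVandermonde u).det =
      (of fun i j : Fin m => (u i.succ ^ ((j : ℕ) + 1) - u i.castSucc ^ ((j : ℕ) + 1))
        / (((j : ℕ) + 1)! : R)).det := by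
  set B : Matrix (Fin (m + 1)) (Fin (m + 1)) R :=
    of fun i j => normVandermonde u i j - Fin.cases 0 (fun i => normVandermonde u i.castSucc j) i
  have hB : (normVandermonde u).det = B.det :=
    det_eq_of_forall_row_eq_smul_add_pred (fun _ => 1) (fun j => by simp [B])
      (fun i j => by simp [B])
  rw [hB, det_succ_column_zero, Fin.sum_univ_succ, sum_eq_zero, add_zero]
  · have hB00 : B 0 0 = 1 := by simp [B, normVandermonde]
    rw [hB00, Fin.succAbove_zero, Fin.val_zero, pow_zero, one_mul, one_mul]
    congr 1 with i j
    simp [B, normVandermonde, sub_div]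
  · intro i _
    simp [B, normVandermonde]

end Field

theorem det_normVandermonde_neg_nonneg {n : ℕ} {y : Fin n → ℝ} (hy : Antitone y) :
    0 ≤ (normVandermonde (-y)).det := by
  rw [det_normVandermonde, det_vandermonde]
  refine div_nonneg (prod_nonneg fun i _ => prod_nonneg fun j hj => ?_)
    (prod_nonneg fun _ _ => by positivity)
  rw [Pi.neg_apply, Pi.neg_apply, neg_sub_neg, sub_nonneg]
  exact hy (mem_Ioi.1 hj).le

theorem det_normVandermonde_neg_eq_prod_div (N : ℕ) (x : ℕ → ℝ) :
    (normVandermonde fun i : Fin N => -x i).det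
      = (∏ i ∈ range N, ∏ j ∈ Ioo i N, (x i - x j)) / ∏ k ∈ range N, (k ! : ℝ) := by
  rw [det_normVandermonde, det_vandermonde, Fin.prod_univ_eq_prod_range (fun k => (k ! : ℝ)),
    ← Fin.prod_univ_eq_prod_range (fun i => ∏ j ∈ Ioo i N, (x i - x j))]
  congr 1
  refine prod_congr rfl fun i _ => ?_
  rw [← Fin.map_valEmbedding_Ioi, prod_map]
  simp only [Fin.valEmbedding_apply, neg_sub_neg]

theorem integral_det_eq_det_integral {𝕜 ι : Type*} [RCLike 𝕜] [Fintype ι] [DecidableEq ι]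
    {α : ι → Type*} [∀ i, MeasurableSpace (α i)] {μ : ∀ i, Measure (α i)} [∀ i, SigmaFinite (μ i)]
    (f : ∀ i, ι → α i → 𝕜) (hf : ∀ i j, Integrable (f i j) (μ i)) :
    ∫ y, (of fun i j => f i j (y i)).det ∂Measure.pi μ = (of fun i j => ∫ t, f i j t ∂μ i).det := by
  simp_rw [← det_transpose (of _), det_apply', transpose_apply, of_apply]
  rw [integral_finsetSum _ fun σ _ =>
    (Integrable.fintype_prod_dep fun i => hf i (σ i)).const_mul _]
  simp_rw [integral_const_mul, integral_fintype_prod_eq_prod]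

theorem integral_neg_pow_div_factorial (a b : ℝ) (j : ℕ) :
    ∫ t in a..b, (-t) ^ j / (j ! : ℝ) = ((-a) ^ (j + 1) - (-b) ^ (j + 1)) / ((j + 1)! : ℝ) := by
  rw [intervalIntegral.integral_div, intervalIntegral.integral_comp_neg (fun t => t ^ j),
    integral_pow, Nat.factorial_succ, Nat.cast_mul, div_div]
  push_cast
  ring

theorem integral_det_normVandermonde_neg {m : ℕ} (x : Fin (m + 1) → ℝ)
    (hx : ∀ i : Fin m, x i.succ ≤ x i.castSucc) :
    ∫ y in Set.univ.pi fun i : Fin m => Set.Icc (x i.succ) (x i.castSucc),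
      (normVandermonde (-y)).det = (normVandermonde (-x)).det := by
  rw [volume_pi, Measure.restrict_pi_pi, det_normVandermonde_succ]
  simp only [normVandermonde, Pi.neg_apply]
  rw [integral_det_eq_det_integral (fun (_ j : Fin m) (t : ℝ) => (-t) ^ (j : ℕ) / ((j : ℕ)! : ℝ))]
  · congr 1 with i j
    rw [of_apply, of_apply, integral_Icc_eq_integral_Ioc,
      ← intervalIntegral.integral_of_le (hx i), integral_neg_pow_div_factorial]
  · intro i j
    exact (Continuous.continuousOn (by fun_prop)).integrableOn_Icc

theorem antitone_of_mem_pi_Icc {m : ℕ} {x : Fin (m + 2) → ℝ} {y : Fin (m + 1) → ℝ}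
    (hy : y ∈ Set.univ.pi fun i => Set.Icc (x i.succ) (x i.castSucc)) : Antitone y :=
  Fin.antitone_iff_succ_le.2 fun i => (hy i.succ trivial).2.trans (hy i.castSucc trivial).1

theorem lintegral_ofReal_det_normVandermonde_neg {m : ℕ} (x : Fin (m + 2) → ℝ) (hx : Antitone x) :
    ∫⁻ y in Set.univ.pi fun i : Fin (m + 1) => Set.Icc (x i.succ) (x i.castSucc),
      ENNReal.ofReal (normVandermonde (-y)).det = ENNReal.ofReal (normVandermonde (-x)).det := by
  have hbox : MeasurableSet
      (Set.univ.pi fun i : Fin (m + 1) => Set.Icc (x i.succ) (x i.castSucc)) :=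
    .univ_pi fun _ => measurableSet_Icc
  have hcont : Continuous fun y : Fin (m + 1) → ℝ => (normVandermonde (-y)).det :=
    Continuous.matrix_det (continuous_pi fun i => continuous_pi fun j => by
      simp only [normVandermonde, of_apply, Pi.neg_apply]; fun_prop)
  rw [← ofReal_integral_eq_lintegral_ofReal, integral_det_normVandermonde_neg x
    fun i => hx i.castSucc_le_succ]
  · exact hcont.continuousOn.integrableOn_compact (isCompact_univ_pi fun _ => isCompact_Icc)
  · exact (ae_restrict_iff' hbox).2
      (.of_forall fun y hy => det_normVandermonde_neg_nonneg (antitone_of_mem_pi_Icc hy))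

def MeasurableEquiv.piFinSnoc {n : ℕ} (α : Fin (n + 1) → Type*) [∀ i, MeasurableSpace (α i)] :
    α (Fin.last n) × (∀ i : Fin n, α i.castSucc) ≃ᵐ ∀ i, α i where
  toEquiv := Fin.snocEquiv α
  measurable_toFun := measurable_pi_iff.2 <| Fin.forall_fin_succ'.2
    ⟨fun i => by simpa [Function.comp_def] using (measurable_pi_apply i).comp measurable_snd,
      by simpa using measurable_fst⟩
  measurable_invFun :=
    (measurable_pi_apply _).prodMk (measurable_pi_lambda _ fun i => measurable_pi_apply _)

theorem MeasurableEquiv.piFinSnoc_apply {n : ℕ} (α : Fin (n + 1) → Type*)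
    [∀ i, MeasurableSpace (α i)] (p : α (Fin.last n) × (∀ i : Fin n, α i.castSucc)) :
    MeasurableEquiv.piFinSnoc α p = Fin.snoc p.2 p.1 :=
  rfl

theorem measurePreserving_piFinSnoc {n : ℕ} {α : Fin (n + 1) → Type*} [∀ i, MeasurableSpace (α i)]
    (μ : ∀ i, Measure (α i)) [∀ i, SigmaFinite (μ i)] :
    MeasurePreserving (MeasurableEquiv.piFinSnoc α)
      ((μ (Fin.last n)).prod (Measure.pi fun i => μ i.castSucc)) (Measure.pi μ) := by
  refine ⟨(MeasurableEquiv.piFinSnoc α).measurable, (Measure.pi_eq fun s _ => ?_).symm⟩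
  rw [MeasurableEquiv.map_apply, Fin.prod_univ_castSucc, mul_comm, ← Measure.pi_pi,
    ← Measure.prod_prod]
  refine congrArg _ (Set.ext fun ⟨y, f⟩ => ?_)
  simp [MeasurableEquiv.piFinSnoc_apply, Fin.forall_fin_succ', and_comm]

theorem continuous_arrE (N : ℕ) (x : ℕ → ℝ) (k i : ℕ) :
    Continuous fun T : ∀ k : Fin (N - 1), Fin (k.1 + 1) → ℝ => arrE N T x k i := by
  unfold arrE
  split_ifs <;> fun_prop

theorem isClosed_GTpolytope (N : ℕ) (x : ℕ → ℝ) : IsClosed (GTpolytope N x) := by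
  simp only [GTpolytope, Set.ofPred_forall, Set.ofPred_and]
  refine isClosed_iInter fun k => isClosed_iInter fun _ => isClosed_iInter fun i =>
    isClosed_iInter fun _ => ?_
  exact (isClosed_le (continuous_arrE ..) (continuous_arrE ..)).inter
    (isClosed_le (continuous_arrE ..) (continuous_arrE ..))

theorem arrE_top (m : ℕ) (T : ∀ k : Fin (m + 1), Fin (k.1 + 1) → ℝ) (x : ℕ → ℝ) (i : ℕ) :
    arrE (m + 2) T x (m + 1) i = x i :=
  dif_neg (by omega)

theorem arrE_snoc (m : ℕ) (x z : ℕ → ℝ) (y : Fin (m + 1) → ℝ) (hz : ∀ i : Fin (m + 1), z i = y i)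
    (S : ∀ k : Fin m, Fin (k.1 + 1) → ℝ) {k i : ℕ} (hik : i ≤ k) (hk : k ≤ m) :
    arrE (m + 2) (Fin.snoc S y) x k i = arrE (m + 1) S z k i := by
  have hi : i < k + 1 := Nat.lt_succ_of_le hik
  rcases hk.lt_or_eq with hk | rfl
  · simp [arrE, Fin.snoc, hk, hi, show k < m + 1 by omega]
  · simp [arrE, Fin.snoc, hi, ← hz ⟨i, hi⟩]

theorem snoc_mem_GTpolytope_iff (m : ℕ) (x z : ℕ → ℝ) (y : Fin (m + 1) → ℝ)
    (hz : ∀ i : Fin (m + 1), z i = y i) (S : ∀ k : Fin m, Fin (k.1 + 1) → ℝ) :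
    Fin.snoc S y ∈ GTpolytope (m + 2) x ↔
      y ∈ Set.univ.pi (fun i : Fin (m + 1) => Set.Icc (x ((i : ℕ) + 1)) (x i)) ∧
        S ∈ GTpolytope (m + 1) z := by
  show (∀ k < m + 1, ∀ i ≤ k, _) ↔ _ ∧ ∀ k < m, ∀ i ≤ k, _
  rw [Nat.forall_lt_succ_right, and_comm]
  refine and_congr ?_ ?_
  · have hrow : ∀ i (hi : i ≤ m), arrE (m + 2) (Fin.snoc S y) x m i =
        y ⟨i, Nat.lt_succ_of_le hi⟩ := by
      intro i hi
      rw [arrE_snoc m x z y hz S hi le_rfl, ← hz]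
      exact dif_neg (by omega)
    rw [Set.mem_univ_pi, Fin.forall_iff]
    refine forall_congr' fun i => ⟨fun h hi => ?_, fun h hi => ?_⟩
    · simpa [arrE_top, hrow i (by omega)] using h (by omega)
    · simpa [arrE_top, hrow i hi] using h (by omega)
  · refine forall₂_congr fun k hk => forall₂_congr fun i hi => ?_
    rw [arrE_snoc m x z y hz S hi hk.le, arrE_snoc m x z y hz S (by omega) hk,
      arrE_snoc m x z y hz S (by omega) hk]

theorem volume_GTpolytope_add_two (m : ℕ) (x : ℕ → ℝ) :
    volume (GTpolytope (m + 2) x) =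
      ∫⁻ y in Set.univ.pi (fun i : Fin (m + 1) => Set.Icc (x ((i : ℕ) + 1)) (x i)),
        volume (GTpolytope (m + 1) (Function.extend Fin.val y 0)) := by
  set e := MeasurableEquiv.piFinSnoc fun k : Fin (m + 1) => Fin (k.1 + 1) → ℝ
  set box := Set.univ.pi fun i : Fin (m + 1) => Set.Icc (x ((i : ℕ) + 1)) (x i)
  have he : MeasurePreserving e volume volume := measurePreserving_piFinSnoc fun _ => volume
  have hslice : ∀ y, volume (Prod.mk y ⁻¹' (e ⁻¹' GTpolytope (m + 2) x)) =
      box.indicator (fun y => volume (GTpolytope (m + 1) (Function.extend Fin.val y 0))) y := by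
    intro y
    have hmem := snoc_mem_GTpolytope_iff m x _ y (Fin.val_injective.extend_apply y 0)
    by_cases hy : y ∈ box
    · rw [Set.indicator_of_mem hy]
      congr 1 with S
      exact (hmem S).trans (and_iff_right hy)
    · rw [Set.indicator_of_notMem hy]
      exact measure_mono_null (fun S h => absurd ((hmem S).1 h).1 hy) measure_empty
  rw [← he.measure_preimage_equiv, Measure.volume_eq_prod,
    Measure.prod_apply (e.measurable (isClosed_GTpolytope _ x).measurableSet),
    ← lintegral_indicator (MeasurableSet.univ_pi fun _ => measurableSet_Icc)]
  exact lintegral_congr hslice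

theorem volume_GTpolytope_eq_ofReal_det (N : ℕ) (x : ℕ → ℝ) (hx : Antitone fun i : Fin N => x i) :
    volume (GTpolytope N x) = ENNReal.ofReal (normVandermonde fun i : Fin N => -x i).det :=
  match N, hx with
  | 0, _ | 1, _ => by simp [GTpolytope, normVandermonde, volume_pi]
  | m + 2, hx => by
    have hslice : ∀ y ∈ Set.univ.pi fun i : Fin (m + 1) => Set.Icc (x ((i : ℕ) + 1)) (x i),
        volume (GTpolytope (m + 1) (Function.extend Fin.val y 0)) =
          ENNReal.ofReal (normVandermonde (-y)).det := fun y hy => by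
      have hext := Fin.val_injective.extend_apply y 0
      have hy' := antitone_of_mem_pi_Icc (x := fun i : Fin (m + 2) => x i) hy
      rw [volume_GTpolytope_eq_ofReal_det (m + 1) _ (by simpa only [hext] using hy')]
      simp only [hext]
      rfl
    rw [volume_GTpolytope_add_two,
      setLIntegral_congr_fun (MeasurableSet.univ_pi fun _ => measurableSet_Icc) hslice]
    exact lintegral_ofReal_det_normVandermonde_neg (fun i : Fin (m + 2) => x i) hx

theorem GTpolytope_volume_general (N : ℕ) (x : ℕ → ℝ)
    (hx : ∀ i j, i < j → j < N → x j < x i) :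
    volume (GTpolytope N x)
      = ENNReal.ofReal ((∏ i ∈ Finset.range N, ∏ j ∈ Finset.Ioo i N, (x i - x j))
          / ∏ k ∈ Finset.range N, (k.factorial : ℝ)) := by
  have hanti : Antitone fun i : Fin N => x i := fun i j hij =>
    hij.lt_or_eq.elim (fun h => (hx i j h j.2).le) fun h => h ▸ le_rfl
  rw [volume_GTpolytope_eq_ofReal_det N x hanti, det_normVandermonde_neg_eq_prod_div]

/-- The Euclidean volume of the Gelfand–Tsetlin polytope `GT_N(x)` is
`∏_{i<j}(x_i - x_j) / ∏_{k=1}^{N-1} k!` for `x` in the open Weyl chamber. -/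
theorem GTpolytope_volume (N : ℕ) (hN : 1 ≤ N) (x : ℕ → ℝ)
    (hx : ∀ i j, i < j → j < N → x j < x i) :
    volume (GTpolytope N x)
      = ENNReal.ofReal ((∏ i ∈ Finset.range N, ∏ j ∈ Finset.Ioo i N, (x i - x j))
          / ∏ k ∈ Finset.range N, (k.factorial : ℝ)) :=
  GTpolytope_volume_general N x hx
end
end

section
/- Let Z evolve by the SDE system dZ_{1,1} = dW_1, and for k = 2,…,N: dZ_{k,i} = dZ_{k-1,i} + (e^{Z_{k,i+1}−Z_{k-1,i}} − e^{Z_{k,i}−Z_{k-1,i-1}}) dt for 1 ≤ i ≤ k−1 (with the absent exponential terms omitted at the boundary i = 1), and dZ_{k,k} = dW_k − e^{Z_{k,k}−Z_{k-1,k-1}} dt. Then, setting Z_{k,i} = (Π_k W)_i, the triangular process (Z_{k,i})_{1≤i≤k≤N} driven by an N-dimensional standard Brownian motion W solves this system, where Π_1 = Id and Π_k = T_1∘···∘T_{k-1}∘Π_{k-1}. -/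
noncomputable section
open MeasureTheory ProbabilityTheory Real Set

/-- `B` is a standard one-dimensional Brownian motion. -/
def IsStdBM {Ω : Type*} [MeasureSpace Ω] (B : ℝ → Ω → ℝ) : Prop :=
  (∀ ω, B 0 ω = 0) ∧
  (∀ ω, Continuous fun t => B t ω) ∧
  (∀ t, Measurable (B t)) ∧
  (∀ s t : ℝ, 0 ≤ s → s ≤ t →
    Measure.map (fun ω => B t ω - B s ω) ℙ = gaussianReal 0 (Real.toNNReal (t - s))) ∧
  (∀ (n : ℕ) (u : ℕ → ℝ), Monotone u → (∀ i, 0 ≤ u i) →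
    iIndepFun
      (fun i : Fin n => fun ω => B (u (i + 1)) ω - B (u i) ω) ℙ)

/-- A family of independent standard one-dimensional Brownian motions. -/
def IsBMFamily {Ω : Type*} [MeasureSpace Ω] (B : ℕ → ℝ → Ω → ℝ) : Prop :=
  (∀ i, IsStdBM (B i)) ∧
  iIndepFun (fun (i : ℕ) (ω : Ω) => fun t : ℝ => B i t ω) ℙ

/-- The path transform `T_i` (coordinates indexed from `0`). -/
def Ttrans (i : ℕ) (η : ℝ → ℕ → ℝ) : ℝ → ℕ → ℝ :=
  fun t j => η t j +
    Real.log (∫ s in Set.Ioc (0 : ℝ) t, Real.exp (η s (i + 1) - η s i)) *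
      ((if j = i then (1 : ℝ) else 0) - (if j = i + 1 then (1 : ℝ) else 0))

/-- `blockOp k = T_0 ∘ T_1 ∘ ⋯ ∘ T_{k-1}`. -/
def blockOp (k : ℕ) : (ℝ → ℕ → ℝ) → (ℝ → ℕ → ℝ) :=
  (List.range k).foldr (fun i f => Ttrans i ∘ f) id

/-- `PiOp k` is the operator `Π_k`:  `Π_1 = Id`, `Π_{k+1} = (T_1 ∘ ⋯ ∘ T_k) ∘ Π_k`. -/
def PiOp : ℕ → (ℝ → ℕ → ℝ) → (ℝ → ℕ → ℝ)
  | 0 => id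
  | (k + 1) => blockOp k ∘ PiOp k

/-- The triangular array `Z_{k,i} = (Π_k W)_i` (row `k` has entries `i = 0, …, k-1`; in the
1-indexed notation of the paper, `Z k i` here is `Z_{k,i+1}`). -/
def Ztri (W : ℝ → ℕ → ℝ) (k i : ℕ) (t : ℝ) : ℝ := PiOp k W t i

open Asymptotics Filter Topology

/-! The block `T_0 ∘ ⋯ ∘ T_{k-1}` maps a path `η` to `Z` with `Z_m = η_m + L_{m+1} - L_m`, where
`L_m = log ∫₀ᵗ exp (η_m + L_{m+1} - η_{m-1})` is built downwards from `L_{k+1} = 0` (and `L_0 = 0`).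
Differentiating, `L_m' = exp (Z_m - η_{m-1})`, and the system of equations is the resulting
identity for the increments of `Z`. The work lies in showing that these integrals converge at `0`
and are positive, so that no junk value of `log` or of the integral occurs. Along the rows
`η = Π_k W` the order of `exp (η_{j+1} - η_j)` as `t → 0⁺` is `t⁻²` for `j + 1 < k`, `t ^ (k - 1)`
for `j + 1 = k` and `t⁰` beyond; then `exp L_m ≍ t ^ m` for `1 ≤ m ≤ k`, and these orders
reproduce themselves in the next row. -/

section Primitive

variable {g : ℝ → ℝ}

lemma integrableOn_Ioc_zero_of_isBigO {n : ℕ} (hg : ContinuousOn g (Ioi 0))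
    (h : g =O[𝓝[>] 0] fun t => t ^ n) (t : ℝ) : IntegrableOn g (Ioc 0 t) := by
  obtain ⟨s, hs, hgs⟩ := h.integrableAtFilter
    (hg.stronglyMeasurableAtFilter_nhdsWithin measurableSet_Ioi 0)
    ⟨Ioc 0 1, Ioc_mem_nhdsGT zero_lt_one, (continuous_pow n).integrableOn_Ioc (μ := volume)⟩
  obtain ⟨ε, hε, hεs⟩ := mem_nhdsGT_iff_exists_Ioo_subset.1 hs
  have hIcc : IntegrableOn g (Icc ε t) :=
    (hg.mono fun x hx => lt_of_lt_of_le hε hx.1).integrableOn_Icc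
  refine ((hgs.mono_set hεs).union hIcc).mono_set fun x hx => ?_
  rcases lt_or_ge x ε with hxε | hxε
  exacts [Or.inl ⟨hx.1, hxε⟩, Or.inr ⟨hxε, hx.2⟩]

lemma Asymptotics.IsBigO.integral_Ioc_zero {u v : ℝ → ℝ} (huv : u =O[𝓝[>] 0] v)
    (hv : ∀ t, 0 < t → 0 ≤ v t) (hu : ∀ t, IntegrableOn u (Ioc 0 t))
    (hvi : ∀ t, IntegrableOn v (Ioc 0 t)) :
    (fun t => ∫ s in Ioc 0 t, u s) =O[𝓝[>] 0] fun t => ∫ s in Ioc 0 t, v s := by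
  obtain ⟨c, -, hc⟩ := huv.exists_pos
  obtain ⟨ε, hε, hεc⟩ := mem_nhdsGT_iff_exists_Ioo_subset.1 hc.bound
  refine IsBigO.of_bound c ?_
  filter_upwards [Ioo_mem_nhdsGT hε] with t ht
  have hvt : ∫ s in Ioc 0 t, ‖v s‖ = ‖∫ s in Ioc 0 t, v s‖ := by
    rw [Real.norm_of_nonneg (setIntegral_nonneg measurableSet_Ioc fun s hs => hv s hs.1)]
    exact setIntegral_congr_fun measurableSet_Ioc fun s hs => Real.norm_of_nonneg (hv s hs.1)
  calc ‖∫ s in Ioc 0 t, u s‖ ≤ ∫ s in Ioc 0 t, ‖u s‖ := norm_integral_le_integral_norm _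
    _ ≤ ∫ s in Ioc 0 t, c * ‖v s‖ :=
        setIntegral_mono_on (hu t).norm ((hvi t).norm.const_mul c) measurableSet_Ioc
          fun s hs => hεc ⟨hs.1, hs.2.trans_lt ht.2⟩
    _ = c * ‖∫ s in Ioc 0 t, v s‖ := by rw [integral_const_mul, hvt]

lemma isTheta_integral_Ioc_zero_of_isTheta_pow {n : ℕ} (hg : g =Θ[𝓝[>] 0] fun t => t ^ n)
    (hg0 : ∀ t, 0 < t → 0 ≤ g t) (hint : ∀ t, IntegrableOn g (Ioc 0 t)) :
    (fun t => ∫ s in Ioc 0 t, g s) =Θ[𝓝[>] 0] fun t => t ^ (n + 1) := by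
  have hpow_int : ∀ t, IntegrableOn (fun s : ℝ => s ^ n) (Ioc 0 t) :=
    fun t => (continuous_pow n).integrableOn_Ioc
  have hpow_nonneg : ∀ t : ℝ, 0 < t → 0 ≤ t ^ n := fun t ht => pow_nonneg ht.le n
  have hprim : (fun t => ∫ s in Ioc 0 t, s ^ n) =ᶠ[𝓝[>] 0]
      fun t => ((n : ℝ) + 1)⁻¹ * t ^ (n + 1) := by
    filter_upwards [self_mem_nhdsWithin] with t ht
    rw [← intervalIntegral.integral_of_le (le_of_lt ht), integral_pow]
    simp [div_eq_inv_mul]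
  refine IsTheta.trans ⟨hg.1.integral_Ioc_zero hpow_nonneg hint hpow_int,
    hg.2.integral_Ioc_zero hg0 hpow_int hint⟩ ?_
  exact hprim.trans_isTheta ((isTheta_const_mul_left (by positivity)).2 isTheta_rfl)

lemma integral_Ioc_zero_pos (hg : ∀ t, 0 < g t) (hint : ∀ t, IntegrableOn g (Ioc 0 t)) {t : ℝ}
    (ht : 0 < t) : 0 < ∫ s in Ioc 0 t, g s := by
  rw [← intervalIntegral.integral_of_le ht.le]
  exact intervalIntegral.intervalIntegral_pos_of_pos_on
    ((intervalIntegrable_iff_integrableOn_Ioc_of_le ht.le).2 (hint t)) (fun x _ => hg x) ht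

lemma hasDerivAt_integral_Ioc_zero (hg : ContinuousOn g (Ioi 0))
    (hint : ∀ t, IntegrableOn g (Ioc 0 t)) {t : ℝ} (ht : 0 < t) :
    HasDerivAt (fun u => ∫ s in Ioc 0 u, g s) (g t) t := by
  have h := intervalIntegral.integral_hasDerivAt_right (a := 0)
    ((intervalIntegrable_iff_integrableOn_Ioc_of_le ht.le).2 (hint t))
    (hg.stronglyMeasurableAtFilter (μ := volume) isOpen_Ioi t ht)
    (hg.continuousAt (Ioi_mem_nhds ht))
  refine h.congr_of_eventuallyEq ?_
  filter_upwards [Ioi_mem_nhds ht] with u hu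
  exact (intervalIntegral.integral_of_le (le_of_lt hu)).symm

end Primitive

section ZpowAsymptotics

variable {f g : ℝ → ℝ} {p q : ℤ}

lemma isTheta_zpow_mul (hf : f =Θ[𝓝[>] 0] fun t => t ^ p) (hg : g =Θ[𝓝[>] 0] fun t => t ^ q) :
    (fun t => f t * g t) =Θ[𝓝[>] 0] fun t => t ^ (p + q) := by
  refine (hf.mul hg).trans_eventuallyEq ?_
  filter_upwards [self_mem_nhdsWithin] with t (ht : 0 < t)
  rw [zpow_add₀ ht.ne']

lemma isTheta_zpow_inv (hf : f =Θ[𝓝[>] 0] fun t => t ^ p) :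
    (fun t => (f t)⁻¹) =Θ[𝓝[>] 0] fun t => t ^ (-p) :=
  hf.inv.trans_eventuallyEq (.of_forall fun t => (zpow_neg t p).symm)

end ZpowAsymptotics

/-- `logWeight η k m` is the logarithm of the integral that `T_{m-1}` adds to coordinate `m - 1`
and subtracts from coordinate `m` inside `T_0 ∘ ⋯ ∘ T_{k-1}`; it is set to `0` outside
`1 ≤ m ≤ k`, so that the block acts on every coordinate by the same formula. -/
def logWeight (η : ℝ → ℕ → ℝ) (k m : ℕ) (t : ℝ) : ℝ :=
  if _ : m = 0 ∨ k < m then 0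
  else Real.log (∫ s in Ioc 0 t, Real.exp (η s m + logWeight η k (m + 1) s - η s (m - 1)))
termination_by k + 1 - m

def weightIntegrand (η : ℝ → ℕ → ℝ) (k m : ℕ) (s : ℝ) : ℝ :=
  Real.exp (η s m + logWeight η k (m + 1) s - η s (m - 1))

section LogWeight

variable {η : ℝ → ℕ → ℝ} {k m : ℕ}

lemma logWeight_of_not_mem (h : m = 0 ∨ k < m) (t : ℝ) : logWeight η k m t = 0 := by
  rw [logWeight, dif_pos h]

lemma logWeight_of_mem (h1 : 1 ≤ m) (h2 : m ≤ k) (t : ℝ) :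
    logWeight η k m t = Real.log (∫ s in Ioc 0 t, weightIntegrand η k m s) := by
  rw [logWeight, dif_neg (by omega)]
  rfl

end LogWeight

section Composition

lemma foldr_Ttrans_apply (η : ℝ → ℕ → ℝ) (k n : ℕ) : ∀ j, j + n = k → ∀ t m,
    (List.range' j n).foldr (fun i f => Ttrans i ∘ f) id η t m =
      η t m + (if j ≤ m then logWeight η k (m + 1) t else 0)
        - (if j < m then logWeight η k m t else 0) := by
  induction n with
  | zero =>
    intro j hj t m
    have h1 : (if j ≤ m then logWeight η k (m + 1) t else 0) = 0 := by
      split_ifs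
      exacts [logWeight_of_not_mem (by omega) t, rfl]
    have h2 : (if j < m then logWeight η k m t else 0) = 0 := by
      split_ifs
      exacts [logWeight_of_not_mem (by omega) t, rfl]
    simp [h1, h2]
  | succ n ih =>
    intro j hj t m
    have hL : logWeight η k (j + 1) t = Real.log (∫ s in Ioc 0 t,
        Real.exp ((List.range' (j + 1) n).foldr (fun i f => Ttrans i ∘ f) id η s (j + 1)
          - (List.range' (j + 1) n).foldr (fun i f => Ttrans i ∘ f) id η s j)) := by
      simp [ih (j + 1) (by omega), weightIntegrand,
        logWeight_of_mem (η := η) (by omega : 1 ≤ j + 1) (by omega : j + 1 ≤ k)]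
    rw [List.range'_succ, List.foldr_cons, Function.comp_apply, Ttrans, ← hL,
      ih (j + 1) (by omega)]
    split_ifs <;> first | omega | (subst_vars; ring)

lemma blockOp_apply (η : ℝ → ℕ → ℝ) (k : ℕ) (t : ℝ) (m : ℕ) :
    blockOp k η t m = η t m + logWeight η k (m + 1) t - logWeight η k m t := by
  rw [blockOp, List.range_eq_range', foldr_Ttrans_apply η k k 0 (zero_add k), if_pos m.zero_le]
  split_ifs with hm
  · rfl
  · rw [logWeight_of_not_mem (m := m) (Or.inl (by omega))]

lemma PiOp_apply_of_le (W : ℝ → ℕ → ℝ) {k i : ℕ} (h : k ≤ i) (t : ℝ) :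
    PiOp k W t i = W t i := by
  induction k with
  | zero => rfl
  | succ k ih =>
    rw [PiOp, Function.comp_apply, blockOp_apply, logWeight_of_not_mem (Or.inr (by omega)),
      logWeight_of_not_mem (Or.inr (by omega)), ih (by omega)]
    ring

end Composition

def rowExponent (k j : ℕ) : ℤ := if j + 1 < k then -2 else if j + 1 = k then (k : ℤ) - 1 else 0

def weightExponent (k m : ℕ) : ℤ := if m = 0 ∨ k < m then 0 else m

lemma rowExponent_add_weightExponent {k m : ℕ} (h1 : 1 ≤ m) (h2 : m ≤ k) :
    rowExponent k (m - 1) + weightExponent k (m + 1) = ((m - 1 : ℕ) : ℤ) := by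
  simp only [rowExponent, weightExponent, Nat.add_one_ne_zero, false_or]
  split_ifs <;> omega

lemma rowExponent_succ (k j : ℕ) :
    rowExponent (k + 1) j = rowExponent k j + weightExponent k (j + 2) + weightExponent k j
      - weightExponent k (j + 1) - weightExponent k (j + 1) := by
  simp only [rowExponent, weightExponent, Nat.add_eq_zero_iff, OfNat.ofNat_ne_zero, one_ne_zero,
    and_false, false_or]
  split_ifs <;> omega

structure IsRegularRow (k : ℕ) (η : ℝ → ℕ → ℝ) : Prop where
  continuousOn : ∀ i, ContinuousOn (fun t => η t i) (Ioi 0)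
  isTheta : ∀ j,
    (fun t => Real.exp (η t (j + 1) - η t j)) =Θ[𝓝[>] 0] fun t => t ^ rowExponent k j

lemma isRegularRow_zero {W : ℝ → ℕ → ℝ} (hW : ∀ i, Continuous fun t => W t i) :
    IsRegularRow 0 W where
  continuousOn i := (hW i).continuousOn
  isTheta j := by
    have hc : Continuous fun t => Real.exp (W t (j + 1) - W t j) := by fun_prop
    have hlim := (hc.tendsto 0).mono_left (nhdsWithin_le_nhds (s := Ioi 0))
    simp only [rowExponent, zpow_zero, if_neg (Nat.not_lt_zero _), if_neg (Nat.succ_ne_zero j)]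
    exact ((isEquivalent_const_iff_tendsto (Real.exp_pos _).ne').2 hlim).isTheta.trans
      (isTheta_const_const (Real.exp_pos _).ne' one_ne_zero)

lemma logWeight_asymptotics_of_not_mem {η : ℝ → ℕ → ℝ} {k m : ℕ} (h : m = 0 ∨ k < m) :
    ContinuousOn (logWeight η k m) (Ioi 0) ∧
      (fun t => Real.exp (logWeight η k m t)) =Θ[𝓝[>] 0] fun t => t ^ weightExponent k m := by
  rw [funext (logWeight_of_not_mem h), weightExponent, if_pos h]
  simp only [Real.exp_zero, zpow_zero]
  exact ⟨continuousOn_const, isTheta_rfl⟩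

namespace IsRegularRow

variable {η : ℝ → ℕ → ℝ} {k m : ℕ} (hη : IsRegularRow k η)
include hη

lemma weightIntegrand_asymptotics (h1 : 1 ≤ m) (h2 : m ≤ k)
    (hcont : ContinuousOn (logWeight η k (m + 1)) (Ioi 0))
    (hΘ : (fun t => Real.exp (logWeight η k (m + 1) t)) =Θ[𝓝[>] 0]
      fun t => t ^ weightExponent k (m + 1)) :
    ContinuousOn (weightIntegrand η k m) (Ioi 0) ∧
      weightIntegrand η k m =Θ[𝓝[>] 0] fun t => t ^ (m - 1) := by
  refine ⟨Real.continuous_exp.comp_continuousOn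
    (((hη.continuousOn m).add hcont).sub (hη.continuousOn (m - 1))), ?_⟩
  have h := isTheta_zpow_mul (hη.isTheta (m - 1)) hΘ
  rw [Nat.sub_add_cancel h1, rowExponent_add_weightExponent h1 h2] at h
  simp only [zpow_natCast] at h
  convert h using 2 with t
  rw [weightIntegrand, ← Real.exp_add]
  congr 1
  ring

theorem logWeight_asymptotics (m : ℕ) :
    ContinuousOn (logWeight η k m) (Ioi 0) ∧
      (fun t => Real.exp (logWeight η k m t)) =Θ[𝓝[>] 0] fun t => t ^ weightExponent k m := by
  induction hd : k + 1 - m generalizing m with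
  | zero => exact logWeight_asymptotics_of_not_mem (by omega)
  | succ d ih =>
    by_cases hm : m = 0 ∨ k < m
    · exact logWeight_asymptotics_of_not_mem hm
    obtain ⟨hgc, hgΘ⟩ := hη.weightIntegrand_asymptotics (m := m) (by omega) (by omega)
      (ih (m + 1) (by omega)).1 (ih (m + 1) (by omega)).2
    have hint := integrableOn_Ioc_zero_of_isBigO hgc hgΘ.1
    have hpos : ∀ t, 0 < t → 0 < ∫ s in Ioc 0 t, weightIntegrand η k m s :=
      fun t => integral_Ioc_zero_pos (fun s => Real.exp_pos _) hint
    have hL : logWeight η k m = fun t => Real.log (∫ s in Ioc 0 t, weightIntegrand η k m s) :=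
      funext (logWeight_of_mem (by omega) (by omega))
    have hexp : weightExponent k m = ((m - 1 + 1 : ℕ) : ℤ) := by
      simp only [weightExponent, if_neg hm]
      omega
    refine ⟨fun t ht => ?_, ?_⟩
    · rw [hL]
      exact ((hasDerivAt_integral_Ioc_zero hgc hint ht).log
        (hpos t ht).ne').continuousAt.continuousWithinAt
    · simp only [hexp, zpow_natCast]
      refine EventuallyEq.trans_isTheta ?_ (isTheta_integral_Ioc_zero_of_isTheta_pow hgΘ
        (fun s _ => (Real.exp_pos _).le) hint)
      filter_upwards [self_mem_nhdsWithin] with t ht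
      rw [hL, Real.exp_log (hpos t ht)]

lemma hasDerivAt_logWeight (h1 : 1 ≤ m) (h2 : m ≤ k) {t : ℝ} (ht : 0 < t) :
    HasDerivAt (logWeight η k m) (Real.exp (blockOp k η t m - η t (m - 1))) t := by
  obtain ⟨hgc, hgΘ⟩ := hη.weightIntegrand_asymptotics h1 h2
    (hη.logWeight_asymptotics (m + 1)).1 (hη.logWeight_asymptotics (m + 1)).2
  have hint := integrableOn_Ioc_zero_of_isBigO hgc hgΘ.1
  have hpos : 0 < ∫ s in Ioc 0 t, weightIntegrand η k m s :=
    integral_Ioc_zero_pos (fun s => Real.exp_pos _) hint ht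
  rw [funext (logWeight_of_mem h1 h2)]
  convert (hasDerivAt_integral_Ioc_zero hgc hint ht).log hpos.ne' using 1
  rw [blockOp_apply, logWeight_of_mem h1 h2, weightIntegrand, sub_right_comm, Real.exp_sub,
    Real.exp_log hpos]

lemma continuousOn_blockOp (i : ℕ) : ContinuousOn (fun t => blockOp k η t i) (Ioi 0) := by
  simp only [blockOp_apply]
  exact ((hη.continuousOn i).add (hη.logWeight_asymptotics (i + 1)).1).sub
    (hη.logWeight_asymptotics i).1

lemma integrableOn_exp_blockOp_sub (i j : ℕ) {s : ℝ} (hs : 0 < s) (t : ℝ) :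
    IntegrableOn (fun u => Real.exp (blockOp k η u i - η u j)) (Ioc s t) :=
  ((Real.continuous_exp.comp_continuousOn ((hη.continuousOn_blockOp i).sub
    (hη.continuousOn j))).mono fun _ hu => hs.trans_le hu.1).integrableOn_Icc.mono_set
      Ioc_subset_Icc_self

lemma logWeight_sub (h1 : 1 ≤ m) (h2 : m ≤ k) {s t : ℝ} (hs : 0 < s) (hst : s ≤ t) :
    logWeight η k m t - logWeight η k m s =
      ∫ u in Ioc s t, Real.exp (blockOp k η u m - η u (m - 1)) := by
  rw [← intervalIntegral.integral_of_le hst]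
  refine (intervalIntegral.integral_eq_sub_of_hasDerivAt (fun x hx => ?_) ?_).symm
  · rw [uIcc_of_le hst] at hx
    exact hη.hasDerivAt_logWeight h1 h2 (hs.trans_le hx.1)
  · exact (intervalIntegrable_iff_integrableOn_Ioc_of_le hst).2
      (hη.integrableOn_exp_blockOp_sub _ _ hs t)

protected lemma blockOp : IsRegularRow (k + 1) (blockOp k η) where
  continuousOn := hη.continuousOn_blockOp
  isTheta j := by
    have hE := fun m => (hη.logWeight_asymptotics m).2
    have h := isTheta_zpow_mul (isTheta_zpow_mul (isTheta_zpow_mul (isTheta_zpow_mul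
      (hη.isTheta j) (hE (j + 2))) (hE j)) (isTheta_zpow_inv (hE (j + 1))))
      (isTheta_zpow_inv (hE (j + 1)))
    convert h using 2 with t
    · simp only [blockOp_apply, ← Real.exp_neg, ← Real.exp_add]
      congr 1
      ring
    · rw [rowExponent_succ, sub_eq_add_neg, sub_eq_add_neg]

theorem blockOp_solves_SDE (hk : 1 ≤ k) {s t : ℝ} (hs : 0 < s) (hst : s ≤ t) :
    (blockOp k η t 0 - blockOp k η s 0 = (η t 0 - η s 0)
      + ∫ u in Ioc s t, Real.exp (blockOp k η u 1 - η u 0)) ∧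
    (∀ i, 1 ≤ i → i + 1 ≤ k →
      blockOp k η t i - blockOp k η s i = (η t i - η s i)
        + ∫ u in Ioc s t, (Real.exp (blockOp k η u (i + 1) - η u i)
            - Real.exp (blockOp k η u i - η u (i - 1)))) ∧
    (blockOp k η t k - blockOp k η s k = (η t k - η s k)
        - ∫ u in Ioc s t, Real.exp (blockOp k η u k - η u (k - 1))) := by
  have hinc : ∀ i, blockOp k η t i - blockOp k η s i = (η t i - η s i)
      + (logWeight η k (i + 1) t - logWeight η k (i + 1) s)
      - (logWeight η k i t - logWeight η k i s) := by
    intro i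
    simp only [blockOp_apply]
    ring
  refine ⟨?_, fun i h1 h2 => ?_, ?_⟩
  · rw [hinc, hη.logWeight_sub le_rfl hk hs hst, Nat.sub_self,
      logWeight_of_not_mem (Or.inl rfl), logWeight_of_not_mem (Or.inl rfl)]
    ring
  · rw [hinc, hη.logWeight_sub (by omega) h2 hs hst, hη.logWeight_sub h1 (by omega) hs hst,
      Nat.add_sub_cancel, integral_sub (hη.integrableOn_exp_blockOp_sub _ _ hs t)
        (hη.integrableOn_exp_blockOp_sub _ _ hs t)]
    ring
  · rw [hinc, hη.logWeight_sub hk le_rfl hs hst, logWeight_of_not_mem (Or.inr k.lt_succ_self),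
      logWeight_of_not_mem (Or.inr k.lt_succ_self)]
    ring

end IsRegularRow

lemma isRegularRow_PiOp {W : ℝ → ℕ → ℝ} (hW : ∀ i, Continuous fun t => W t i) :
    ∀ k, IsRegularRow k (PiOp k W)
  | 0 => isRegularRow_zero hW
  | k + 1 => (isRegularRow_PiOp hW k).blockOp

theorem Ztri_solves_SDE_general {Ω : Type*} [MeasureSpace Ω]
    (N : ℕ) (B : ℕ → ℝ → Ω → ℝ) (hB : IsBMFamily B) :
    ∀ᵐ ω ∂(ℙ : Measure Ω), ∀ s t : ℝ, 0 < s → s < t →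
      (Ztri (fun u i => B i u ω) 1 0 t - Ztri (fun u i => B i u ω) 1 0 s
          = B 0 t ω - B 0 s ω) ∧
      ∀ k : ℕ, 2 ≤ k → k ≤ N →
        (Ztri (fun u i => B i u ω) k 0 t - Ztri (fun u i => B i u ω) k 0 s
            = (Ztri (fun u i => B i u ω) (k - 1) 0 t - Ztri (fun u i => B i u ω) (k - 1) 0 s)
              + ∫ u in Set.Ioc s t,
                  Real.exp (Ztri (fun u' i => B i u' ω) k 1 u
                    - Ztri (fun u' i => B i u' ω) (k - 1) 0 u)) ∧
        (∀ i : ℕ, 1 ≤ i → i + 1 ≤ k - 1 →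
          Ztri (fun u i' => B i' u ω) k i t - Ztri (fun u i' => B i' u ω) k i s
            = (Ztri (fun u i' => B i' u ω) (k - 1) i t
                - Ztri (fun u i' => B i' u ω) (k - 1) i s)
              + ∫ u in Set.Ioc s t,
                  (Real.exp (Ztri (fun u' i' => B i' u' ω) k (i + 1) u
                      - Ztri (fun u' i' => B i' u' ω) (k - 1) i u)
                    - Real.exp (Ztri (fun u' i' => B i' u' ω) k i u
                      - Ztri (fun u' i' => B i' u' ω) (k - 1) (i - 1) u))) ∧
        (Ztri (fun u i => B i u ω) k (k - 1) t - Ztri (fun u i => B i u ω) k (k - 1) s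
            = (B (k - 1) t ω - B (k - 1) s ω)
              - ∫ u in Set.Ioc s t,
                  Real.exp (Ztri (fun u' i => B i u' ω) k (k - 1) u
                    - Ztri (fun u' i => B i u' ω) (k - 1) (k - 2) u)) := by
  refine Eventually.of_forall fun ω s t hs hst => ⟨rfl, fun k hk _ => ?_⟩
  obtain ⟨κ, rfl⟩ : ∃ κ, k = κ + 1 := ⟨k - 1, by omega⟩
  have hW : ∀ i, Continuous fun u => B i u ω := fun i => (hB.1 i).2.1 ω
  obtain ⟨h0, hmid, htop⟩ := (isRegularRow_PiOp hW κ).blockOp_solves_SDE (by omega) hs hst.le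
  rw [PiOp_apply_of_le _ le_rfl, PiOp_apply_of_le _ le_rfl] at htop
  rw [Nat.add_sub_cancel, show κ + 1 - 2 = κ - 1 by omega]
  exact ⟨h0, hmid, htop⟩

/-- Driven by an `N`-dimensional standard Brownian motion `W`, the triangular array
`Z_{k,i} = (Π_k W)_i` solves (in integrated, pathwise form) the coupled system
`dZ_{1,1} = dW_1`, and for `2 ≤ k ≤ N`:
`dZ_{k,1} = dZ_{k-1,1} + e^{Z_{k,2}-Z_{k-1,1}} dt`,
`dZ_{k,i} = dZ_{k-1,i} + (e^{Z_{k,i+1}-Z_{k-1,i}} - e^{Z_{k,i}-Z_{k-1,i-1}}) dt` for `1 < i < k`,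
`dZ_{k,k} = dW_k - e^{Z_{k,k}-Z_{k-1,k-1}} dt`. -/
theorem Ztri_solves_SDE {Ω : Type*} [MeasureSpace Ω] [IsProbabilityMeasure (ℙ : Measure Ω)]
    (N : ℕ) (hN : 1 ≤ N) (B : ℕ → ℝ → Ω → ℝ) (hB : IsBMFamily B) :
    ∀ᵐ ω ∂(ℙ : Measure Ω), ∀ s t : ℝ, 0 < s → s < t →
      (Ztri (fun u i => B i u ω) 1 0 t - Ztri (fun u i => B i u ω) 1 0 s
          = B 0 t ω - B 0 s ω) ∧
      ∀ k : ℕ, 2 ≤ k → k ≤ N →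
        (Ztri (fun u i => B i u ω) k 0 t - Ztri (fun u i => B i u ω) k 0 s
            = (Ztri (fun u i => B i u ω) (k - 1) 0 t - Ztri (fun u i => B i u ω) (k - 1) 0 s)
              + ∫ u in Set.Ioc s t,
                  Real.exp (Ztri (fun u' i => B i u' ω) k 1 u
                    - Ztri (fun u' i => B i u' ω) (k - 1) 0 u)) ∧
        (∀ i : ℕ, 1 ≤ i → i + 1 ≤ k - 1 →
          Ztri (fun u i' => B i' u ω) k i t - Ztri (fun u i' => B i' u ω) k i s
            = (Ztri (fun u i' => B i' u ω) (k - 1) i t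
                - Ztri (fun u i' => B i' u ω) (k - 1) i s)
              + ∫ u in Set.Ioc s t,
                  (Real.exp (Ztri (fun u' i' => B i' u' ω) k (i + 1) u
                      - Ztri (fun u' i' => B i' u' ω) (k - 1) i u)
                    - Real.exp (Ztri (fun u' i' => B i' u' ω) k i u
                      - Ztri (fun u' i' => B i' u' ω) (k - 1) (i - 1) u))) ∧
        (Ztri (fun u i => B i u ω) k (k - 1) t - Ztri (fun u i => B i u ω) k (k - 1) s
            = (B (k - 1) t ω - B (k - 1) s ω)
              - ∫ u in Set.Ioc s t,
                  Real.exp (Ztri (fun u' i => B i u' ω) k (k - 1) u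
                    - Ztri (fun u' i => B i u' ω) (k - 1) (k - 2) u)) :=
  Ztri_solves_SDE_general N B hB
end
end

section
/- The unique critical point T^x of the function −F_0(T) on Γ(x) satisfies (1/k) Σ_{i=1}^k T^x_{k,i} = (1/N) Σ_{i=1}^N x_i for all 1 ≤ k ≤ N−1; that is, each row of the critical array has the same average as the top row x. -/
/-!
Fix a row `k` and put `P_j = e^{T_{k+1,j+1}} + e^{T_{k-1,j}}` and
`Q_j = e^{-T_{k+1,j}} + e^{-T_{k-1,j-1}}`, omitting the terms whose index lies outside row `k - 1`.
The critical equation at `T_{k,j}` says `e^{2 T_{k,j}} = P_j / Q_j`, and since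
`(e^a + e^b) / (e^{-a} + e^{-b}) = e^{a+b}`, the logarithms telescope along the row:
`2 Σ_j T_{k,j} = Σ_j T_{k+1,j} + Σ_j T_{k-1,j}`. So the row sums form an arithmetic progression
that starts at the empty row, with sum `0`, and the sum of row `k` is proportional to its
length `k + 1`.
-/

noncomputable section
open Real

/-- The Toda potential `-F_0(T) = Σ_{k<N-1} Σ_{i≤k} (e^{A_{k,i}-A_{k+1,i}} + e^{A_{k+1,i+1}-A_{k,i}})`
of a triangular array `A` (0-indexed rows `0, …, N-1`, row `k` with entries `0, …, k`). -/
def todaPot (N : ℕ) (A : ℕ → ℕ → ℝ) : ℝ :=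
  ∑ k ∈ Finset.range (N - 1), ∑ i ∈ Finset.range (k + 1),
    (Real.exp (A k i - A (k + 1) i) + Real.exp (A (k + 1) (i + 1) - A k i))

/-- Update the single entry `(k, i)` of the array `A` to the value `r`. -/
def updEntry (A : ℕ → ℕ → ℝ) (k i : ℕ) (r : ℝ) : ℕ → ℕ → ℝ :=
  fun k' i' => if k' = k ∧ i' = i then r else A k' i'

open Finset

lemma updEntry_self (A : ℕ → ℕ → ℝ) (k i : ℕ) : updEntry A k i (A k i) = A := by
  funext p q
  unfold updEntry
  split_ifs with h
  · rw [h.1, h.2]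
  · rfl

lemma hasDerivAt_updEntry (A : ℕ → ℕ → ℝ) (k i p q : ℕ) :
    HasDerivAt (fun r => updEntry A k i r p q) (if p = k ∧ q = i then 1 else 0) (A k i) := by
  by_cases h : p = k ∧ q = i
  · simpa [updEntry, h] using hasDerivAt_id' (A k i)
  · simpa [updEntry, h] using hasDerivAt_const (A k i) (A p q)

lemma hasDerivAt_todaPot_updEntry (N : ℕ) (A : ℕ → ℕ → ℝ) (k i : ℕ) :
    HasDerivAt (fun r => todaPot N (updEntry A k i r))
      (∑ p ∈ range (N - 1), ∑ q ∈ range (p + 1),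
        (exp (A p q - A (p + 1) q) *
            ((if p = k ∧ q = i then 1 else 0) - (if p + 1 = k ∧ q = i then 1 else 0))
          + exp (A (p + 1) (q + 1) - A p q) *
            ((if p + 1 = k ∧ q + 1 = i then 1 else 0) - (if p = k ∧ q = i then 1 else 0))))
      (A k i) := by
  have hU := hasDerivAt_updEntry A k i
  unfold todaPot
  refine HasDerivAt.fun_sum fun p _ => HasDerivAt.fun_sum fun q _ => ?_
  simpa only [updEntry_self] using
    (((hU p q).fun_sub (hU (p + 1) q)).exp).fun_add (((hU (p + 1) (q + 1)).fun_sub (hU p q)).exp)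

lemma sum_triangle_ite_eq (n a b p q : ℕ) (f : ℕ → ℕ → ℝ) :
    ∑ k ∈ range n, ∑ i ∈ range (k + 1), (if k + a = p ∧ i + b = q then f k i else 0)
      = if a ≤ p ∧ b ≤ q ∧ p - a < n ∧ q - b ≤ p - a then f (p - a) (q - b) else 0 := by
  split_ifs with h
  · rw [sum_eq_single_of_mem (p - a) (mem_range.2 (by omega)),
      sum_eq_single_of_mem (q - b) (mem_range.2 (by omega)), if_pos (by omega)]
    · exact fun i _ hi => if_neg (by omega)
    · exact fun k _ hk => sum_eq_zero fun i _ => if_neg (by omega)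
  · refine sum_eq_zero fun k hk => sum_eq_zero fun i hi => if_neg ?_
    simp only [mem_range] at hk hi
    omega

lemma critical_eq_of_deriv_todaPot_eq_zero {N : ℕ} {A : ℕ → ℕ → ℝ} {k i : ℕ}
    (hk : k < N - 1) (hi : i ≤ k)
    (hcrit : deriv (fun r => - todaPot N (updEntry A k i r)) (A k i) = 0) :
    exp (A k i - A (k + 1) i) + (if 1 ≤ i then exp (A k i - A (k - 1) (i - 1)) else 0)
      = exp (A (k + 1) (i + 1) - A k i) + (if i < k then exp (A (k - 1) i - A k i) else 0) := by
  rw [(hasDerivAt_todaPot_updEntry N A k i).fun_neg.deriv, neg_eq_zero] at hcrit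
  simp only [mul_sub, mul_boole, sum_add_distrib, sum_sub_distrib] at hcrit
  have h00 := sum_triangle_ite_eq (N - 1) 0 0 k i
  have h10 := sum_triangle_ite_eq (N - 1) 1 0 k i
  have h11 := sum_triangle_ite_eq (N - 1) 1 1 k i
  simp only [add_zero, Nat.sub_zero] at h00 h10 h11
  rw [h00, h00, h10, h11] at hcrit
  -- contextual: the `if` conditions `1 ≤ k`, `1 ≤ i` discharge the `k - 1 + 1 = k` rewrites
  simp (contextual := true) only [zero_le, true_and, and_self, hk, hi, ↓reduceIte,
    Nat.sub_add_cancel] at hcrit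
  split_ifs at hcrit ⊢ <;> first | omega | linarith

lemma exp_add_exp_eq_exp_add_mul (a b : ℝ) :
    exp a + exp b = exp (a + b) * (exp (-a) + exp (-b)) := by
  rw [mul_add, ← exp_add, ← exp_add, add_neg_cancel_right, add_neg_cancel_comm, add_comm]

lemma two_mul_sum_eq_of_critical_eq {t u v : ℕ → ℝ} {K : ℕ}
    (h : ∀ j ≤ K, exp (t j - u j) + (if 1 ≤ j then exp (t j - v (j - 1)) else 0)
      = exp (u (j + 1) - t j) + (if j < K then exp (v j - t j) else 0)) :
    2 * ∑ j ∈ range (K + 1), t j = ∑ j ∈ range (K + 2), u j + ∑ j ∈ range K, v j := by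
  set P : ℕ → ℝ := fun j => exp (u (j + 1)) + if j < K then exp (v j) else 0
  set Q : ℕ → ℝ := fun j => exp (-u j) + if 1 ≤ j then exp (-v (j - 1)) else 0
  have hQ : ∀ j, 0 < Q j := fun j =>
    add_pos_of_pos_of_nonneg (exp_pos _) (by split_ifs <;> positivity)
  have hP : ∀ j, 0 < P j := fun j =>
    add_pos_of_pos_of_nonneg (exp_pos _) (by split_ifs <;> positivity)
  have ht : ∀ j ≤ K, 2 * t j = log (P j) - log (Q j) := by
    intro j hj
    have hPQ : exp (t j) * Q j = P j * exp (-t j) := by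
      have := h j hj
      simp only [P, Q, sub_eq_add_neg, exp_add] at this ⊢
      split_ifs at this ⊢ <;> linear_combination this
    have := congrArg log hPQ
    rw [log_mul (exp_pos _).ne' (hQ j).ne', log_mul (hP j).ne' (exp_pos _).ne', log_exp,
      log_exp] at this
    linarith
  have hPK : log (P K) = u (K + 1) := by simp [P]
  have hQ0 : log (Q 0) = - u 0 := by simp [Q]
  have hPQ : ∀ j < K, log (P j) - log (Q (j + 1)) = u (j + 1) + v j := by
    intro j hj
    have : P j = exp (u (j + 1) + v j) * Q (j + 1) := by
      simp only [P, Q, if_pos hj, if_pos (Nat.le_add_left 1 j), Nat.add_sub_cancel]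
      exact exp_add_exp_eq_exp_add_mul _ _
    rw [this, log_mul (exp_pos _).ne' (hQ _).ne', log_exp]
    ring
  calc 2 * ∑ j ∈ range (K + 1), t j
      = ∑ j ∈ range (K + 1), (log (P j) - log (Q j)) := by
        rw [mul_sum]
        exact sum_congr rfl fun j hj => ht j (by simpa [Nat.lt_succ_iff] using hj)
    _ = log (P K) - log (Q 0) + ∑ j ∈ range K, (log (P j) - log (Q (j + 1))) := by
        rw [sum_sub_distrib, sum_range_succ, sum_range_succ', sum_sub_distrib]
        ring
    _ = ∑ j ∈ range (K + 2), u j + ∑ j ∈ range K, v j := by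
        rw [hPK, hQ0, sum_congr rfl fun j hj => hPQ j (mem_range.1 hj), sum_add_distrib,
          sum_range_succ, sum_range_succ']
        ring

lemma eq_add_mul_sub_of_add_eq_two_mul {s : ℕ → ℝ} {n : ℕ}
    (h : ∀ k, k + 2 ≤ n → s (k + 2) + s k = 2 * s (k + 1)) :
    ∀ k ≤ n, s k = s 0 + k * (s 1 - s 0) := by
  intro k
  induction k using Nat.twoStepInduction with
  | zero => simp
  | one => simp
  | more k ih₀ ih₁ =>
    intro hk
    rw [eq_sub_of_add_eq (h k hk), ih₁ (by omega), ih₀ (by omega)]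
    push_cast
    ring

theorem critical_point_row_averages_general (N : ℕ) (x : ℕ → ℝ) (A : ℕ → ℕ → ℝ)
    (htop : ∀ i < N, A (N - 1) i = x i)
    (hcrit : ∀ k < N - 1, ∀ i ≤ k,
      deriv (fun r => - todaPot N (updEntry A k i r)) (A k i) = 0) :
    ∀ k < N - 1,
      (∑ i ∈ Finset.range (k + 1), A k i) / (k + 1)
        = (∑ i ∈ Finset.range N, x i) / N := by
  intro k hk
  -- `S n` is the sum of row `n - 1`, so that the empty row `S 0` enters the recurrence
  set S : ℕ → ℝ := fun n => ∑ i ∈ range n, A (n - 1) i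
  have hrec : ∀ m, m + 2 ≤ N → S (m + 2) + S m = 2 * S (m + 1) := fun m hm =>
    (two_mul_sum_eq_of_critical_eq fun j hj =>
      critical_eq_of_deriv_todaPot_eq_zero (by omega) hj (hcrit m (by omega) j hj)).symm
  have hS0 : S 0 = 0 := sum_range_zero _
  have hrow := eq_add_mul_sub_of_add_eq_two_mul hrec
  have hx : ∑ i ∈ range N, x i = S N := sum_congr rfl fun i hi => (htop i (mem_range.1 hi)).symm
  have hN : (N : ℝ) ≠ 0 := Nat.cast_ne_zero.2 (by omega)
  change S (k + 1) / _ = _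
  simp only [hS0, zero_add, sub_zero] at hrow
  rw [hx, hrow (k + 1) (by omega), hrow N le_rfl, Nat.cast_succ,
    mul_div_cancel_left₀ _ (Nat.cast_add_one_ne_zero k), mul_div_cancel_left₀ _ hN]

/-- At a critical point of `F_0` on `Γ(x)` (all partial derivatives in the free entries vanish),
every row of the array has the same average as the top row `x`. -/
theorem critical_point_row_averages (N : ℕ) (hN : 1 ≤ N) (x : ℕ → ℝ) (A : ℕ → ℕ → ℝ)
    (htop : ∀ i < N, A (N - 1) i = x i)
    (hcrit : ∀ k < N - 1, ∀ i ≤ k,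
      deriv (fun r => - todaPot N (updEntry A k i r)) (A k i) = 0) :
    ∀ k < N - 1,
      (∑ i ∈ Finset.range (k + 1), A k i) / (k + 1)
        = (∑ i ∈ Finset.range N, x i) / N :=
  critical_point_row_averages_general N x A htop hcrit
end
end
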